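/- Fix odd m ≥ 1 and the run-length constraint ℓ ≥ 1. For any sequence s₀, s₁, ..., s_{K} where each s_j is built by concatenating j codewords (each chosen from a complementary pair {c, c̄} of length-m run-length-ℓ-limited 4-ary words, the choice made so the new codeword's disparity has sign opposite to the running disparity) together with one arbitrary bridging symbol per codeword, the total disparity of the length-K(m+1) sequence lies in [−(m+1), m+1]. -/

import Mathlib

/-! A nonzero running disparity `S` with `|S| ≤ m + 1` is moved towards zero by the next codeword,
by at least one and at most `m`, so it lands in `[-m, m]` by integrality; the bridging symbol adds at
most one more. A zero running disparity can move by at most `m + 1` in one step. -/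

/-- A sequence (as a list) contains a run of `L` identical consecutive symbols. -/
def hasRun (L : ℕ) (l : List (Fin 4)) : Prop := ∃ x : Fin 4, List.replicate L x <:+: l

/-- Disparity `p(c) = (#G + #C) − (#A + #T)` with `A=0, T=1, G=2, C=3`. -/
def disparity (l : List (Fin 4)) : ℤ :=
  ((l.count 2 + l.count 3 : ℕ) : ℤ) - ((l.count 0 + l.count 1 : ℕ) : ℤ)

lemma disparity_cons (a : Fin 4) (l : List (Fin 4)) :
    disparity (a :: l) = disparity l + disparity [a] := by
  fin_cases a <;> simp [disparity] <;> ring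

lemma abs_disparity_singleton_le_one (a : Fin 4) : |disparity [a]| ≤ 1 := by
  fin_cases a <;> simp [disparity]

lemma abs_disparity_le_length (l : List (Fin 4)) : |disparity l| ≤ l.length := by
  induction l with
  | nil => simp [disparity]
  | cons a l ih =>
    calc |disparity (a :: l)| ≤ |disparity l| + |disparity [a]| := by
          rw [disparity_cons]; exact abs_add_le _ _
      _ ≤ l.length + 1 := add_le_add ih (abs_disparity_singleton_le_one a)
      _ = (a :: l).length := by simp

lemma abs_add_add_le_of_sign_opposite {S a e : ℤ} (m : ℕ) (hS : |S| ≤ m + 1) (ha : |a| ≤ m)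
    (he : |e| ≤ 1) (hpos : 0 < S → a < 0) (hneg : S < 0 → 0 < a) :
    |S + (a + e)| ≤ m + 1 := by
  rw [abs_le] at hS ha he ⊢
  rcases lt_trichotomy S 0 with h | h | h
  · have := hneg h; omega
  · omega
  · have := hpos h; omega

lemma abs_sum_range_le_of_sign_opposite (m K : ℕ) (a e : ℕ → ℤ)
    (ha : ∀ j < K, |a j| ≤ m) (he : ∀ j < K, |e j| ≤ 1)
    (hsign : ∀ j < K,
      (0 < ∑ i ∈ Finset.range j, (a i + e i) → a j < 0) ∧
      (∑ i ∈ Finset.range j, (a i + e i) < 0 → 0 < a j)) :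
    |∑ i ∈ Finset.range K, (a i + e i)| ≤ m + 1 := by
  induction K with
  | zero => simp only [Finset.range_zero, Finset.sum_empty, abs_zero]; positivity
  | succ K ih =>
    rw [Finset.sum_range_succ]
    exact abs_add_add_le_of_sign_opposite m
      (ih (fun j hj => ha j (by omega)) (fun j hj => he j (by omega))
        (fun j hj => hsign j (by omega)))
      (ha K K.lt_succ_self) (he K K.lt_succ_self)
      (hsign K K.lt_succ_self).1 (hsign K K.lt_succ_self).2

theorem stmt17_general (ℓ m : ℕ) (K : ℕ)
    (w : ℕ → List (Fin 4)) (b : ℕ → Fin 4)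
    (hcode : ∀ j < K, (w j).length = m ∧ ¬ hasRun (ℓ + 1) (w j))
    (hsign : ∀ j < K,
      (0 < ∑ i ∈ Finset.range j, (disparity (w i) + disparity [b i]) →
        disparity (w j) < 0) ∧
      (∑ i ∈ Finset.range j, (disparity (w i) + disparity [b i]) < 0 →
        0 < disparity (w j))) :
    |∑ i ∈ Finset.range K, (disparity (w i) + disparity [b i])| ≤ (m : ℤ) + 1 := by
  refine abs_sum_range_le_of_sign_opposite m K _ _ (fun j hj => ?_)
    (fun j _ => abs_disparity_singleton_le_one (b j)) hsign
  simpa [(hcode j hj).1] using abs_disparity_le_length (w j)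

/-- Balancing: fix odd `m` and `ℓ ≥ 1`. Suppose codewords `w 0, …, w (K-1)` are
length-`m` run-length-`ℓ`-limited 4-ary words, each followed by one bridging symbol
`b j`, and each codeword is chosen (from a complementary pair) so that its disparity
has sign opposite to the running disparity of the sequence built so far. Then the
total disparity of the resulting length-`K(m+1)` sequence lies in `[−(m+1), m+1]`. -/
theorem stmt17 (ℓ m : ℕ) (hℓ : 1 ≤ ℓ) (hm : Odd m) (K : ℕ)
    (w : ℕ → List (Fin 4)) (b : ℕ → Fin 4)
    (hcode : ∀ j < K, (w j).length = m ∧ ¬ hasRun (ℓ + 1) (w j))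
    (hsign : ∀ j < K,
      (0 < ∑ i ∈ Finset.range j, (disparity (w i) + disparity [b i]) →
        disparity (w j) < 0) ∧
      (∑ i ∈ Finset.range j, (disparity (w i) + disparity [b i]) < 0 →
        0 < disparity (w j))) :
    |∑ i ∈ Finset.range K, (disparity (w i) + disparity [b i])| ≤ (m : ℤ) + 1 :=
  stmt17_general ℓ m K w b hcode hsign
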